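/- Let (A, ∘) be a pre-Lie superalgebra over a field of characteristic zero and let R₁, R₂ : A → A be Rota-Baxter operators of weight zero on (A, ∘) that commute: R₁ ∘ R₂ = R₂ ∘ R₁ (as maps). Define the L-dendriform superalgebra products x ▷ y := R₁(x)∘y and x ◁ y := −(−1)^{|x||y|} y∘R₁(x). Then R₂ is a Rota-Baxter operator of weight zero on the L-dendriform superalgebra (A, ▷, ◁), i.e. R₂(x) ▷ R₂(y) = R₂(R₂(x)▷y + x▷R₂(y)) and R₂(x) ◁ R₂(y) = R₂(R₂(x)◁y + x◁R₂(y)) for all homogeneous x, y. -/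
import Mathlib


/-- The super sign `(−1)^{|x||y|}` for parities `i`, `j`. -/
def sgn (K : Type*) [Field K] (i j : ZMod 2) : K := (-1 : K) ^ (i.val * j.val)

/-- The product `x ▷ y := R(x)∘y`. -/
def rtOp {K A : Type*} [Field K] [AddCommGroup A] [Module K A]
    (circ : A →ₗ[K] A →ₗ[K] A) (R : A →ₗ[K] A) (x y : A) : A := circ (R x) y

/-- The product `x ◁ y := −(−1)^{|x||y|} y∘R(x)` on homogeneous elements of
parities `i`, `j`. -/
def ltOp {K A : Type*} [Field K] [AddCommGroup A] [Module K A]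
    (circ : A →ₗ[K] A →ₗ[K] A) (R : A →ₗ[K] A) (i j : ZMod 2) (x y : A) : A :=
  -(sgn K i j • circ y (R x))

/-- if `R₁`, `R₂` are commuting Rota-Baxter operators of weight zero on a
pre-Lie superalgebra `(A,∘)`, then `R₂` is a Rota-Baxter operator of weight zero on the
L-dendriform superalgebra `(A,▷,◁)` built from `R₁` via `x ▷ y := R₁(x)∘y`,
`x ◁ y := −(−1)^{|x||y|} y∘R₁(x)`. -/
theorem stmt19 {K A : Type*} [Field K] [CharZero K] [AddCommGroup A] [Module K A]
    (𝒜 : ZMod 2 → Submodule K A) (hgr : DirectSum.IsInternal 𝒜)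
    (circ : A →ₗ[K] A →ₗ[K] A)
    (hcirc_even : ∀ (i j : ZMod 2), ∀ x ∈ 𝒜 i, ∀ y ∈ 𝒜 j, circ x y ∈ 𝒜 (i + j))
    (hpre : ∀ (i j k : ZMod 2), ∀ x ∈ 𝒜 i, ∀ y ∈ 𝒜 j, ∀ z ∈ 𝒜 k,
      circ (circ x y) z - circ x (circ y z)
        = sgn K i j • (circ (circ y x) z - circ y (circ x z)))
    (R₁ R₂ : A →ₗ[K] A)
    (hR₁ : ∀ (i : ZMod 2), ∀ x ∈ 𝒜 i, R₁ x ∈ 𝒜 i)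
    (hR₂ : ∀ (i : ZMod 2), ∀ x ∈ 𝒜 i, R₂ x ∈ 𝒜 i)
    (hRB₁ : ∀ (i j : ZMod 2), ∀ x ∈ 𝒜 i, ∀ y ∈ 𝒜 j,
      circ (R₁ x) (R₁ y) = R₁ (circ (R₁ x) y + circ x (R₁ y)))
    (hRB₂ : ∀ (i j : ZMod 2), ∀ x ∈ 𝒜 i, ∀ y ∈ 𝒜 j,
      circ (R₂ x) (R₂ y) = R₂ (circ (R₂ x) y + circ x (R₂ y)))
    (hcomm : ∀ x : A, R₁ (R₂ x) = R₂ (R₁ x)) :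
    -- R₂ is a Rota-Baxter operator of weight zero on (A, ▷, ◁)
    (∀ (i j : ZMod 2), ∀ x ∈ 𝒜 i, ∀ y ∈ 𝒜 j,
      rtOp circ R₁ (R₂ x) (R₂ y)
        = R₂ (rtOp circ R₁ (R₂ x) y + rtOp circ R₁ x (R₂ y))) ∧
    (∀ (i j : ZMod 2), ∀ x ∈ 𝒜 i, ∀ y ∈ 𝒜 j,
      ltOp circ R₁ i j (R₂ x) (R₂ y)
        = R₂ (ltOp circ R₁ i j (R₂ x) y + ltOp circ R₁ i j x (R₂ y))) := by
  constructor
  · intro i j x hx y hy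
    have h := hRB₂ i j (R₁ x) (hR₁ i x hx) y hy
    simp only [rtOp, hcomm, h, map_add]
  · intro i j x hx y hy
    have h := hRB₂ j i y hy (R₁ x) (hR₁ i x hx)
    simp only [ltOp, hcomm, h, map_add, map_smul, map_neg, smul_add]
    abel
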